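/- For every even integer n ≥ 16, the circulant graph Circ(n, {1, 2, 4, 5, 6, 7}) is a nut graph. -/

import Mathlib

open Finset Polynomial

/-- The circulant graph `Circ(n, S)` on the vertex set `Fin n` (identified with `ℤ/nℤ`):
distinct vertices `i` and `j` are adjacent iff `i - j ≡ ±s (mod n)` for some `s ∈ S`. -/
def circ (n : ℕ) (S : Finset ℕ) : SimpleGraph (Fin n) where
  Adj i j := i ≠ j ∧ ∃ s ∈ S,
      ((i.val : ZMod n) - (j.val : ZMod n) = (s : ZMod n) ∨
        (j.val : ZMod n) - (i.val : ZMod n) = (s : ZMod n))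
  symm := by
    constructor
    rintro i j ⟨hij, s, hs, h⟩
    exact ⟨hij.symm, s, hs, h.symm⟩
  loopless := by
    constructor
    rintro i ⟨h, -⟩
    exact h rfl

open Classical in
/-- The adjacency matrix (over `ℚ`) of a graph on `Fin n`. -/
noncomputable def adjMat {n : ℕ} (G : SimpleGraph (Fin n)) :
    Matrix (Fin n) (Fin n) ℚ :=
  Matrix.of fun i j => if G.Adj i j then 1 else 0

/-- A graph on at least two vertices is a nut graph if the kernel of its rational
adjacency matrix is one-dimensional, spanned by a vector having no zero entries. -/
def IsNutGraph {n : ℕ} (G : SimpleGraph (Fin n)) : Prop :=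
  2 ≤ n ∧ ∃ v : Fin n → ℚ, (∀ i, v i ≠ 0) ∧ (adjMat G).mulVec v = 0 ∧
    ∀ w : Fin n → ℚ, (adjMat G).mulVec w = 0 → ∃ c : ℚ, w = c • v

open Classical in
/-- The degree of a vertex of a graph on `Fin n`. -/
noncomputable def degOf {n : ℕ} (G : SimpleGraph (Fin n)) (v : Fin n) : ℕ :=
  (Finset.univ.filter fun w => G.Adj v w).card

/-- A graph is `d`-regular if every vertex has degree `d`. -/
def IsRegularGraph {n : ℕ} (G : SimpleGraph (Fin n)) (d : ℕ) : Prop :=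
  ∀ v, degOf G v = d

/-- The eigenvalue polynomial `P(y) = ∑_{k=1}^{n-1} a_k y^k`, where `a_k = 1` iff
`k ∈ S` or `n - k ∈ S`. -/
noncomputable def Pval (n : ℕ) (S : Finset ℕ) (y : ℂ) : ℂ :=
  ∑ k ∈ Finset.Ico 1 n, (if k ∈ S ∨ n - k ∈ S then (1 : ℂ) else 0) * y ^ k

/-- `ω = e^{2πi/n}`. -/
noncomputable def omegaC (n : ℕ) : ℂ :=
  Complex.exp (2 * (Real.pi : ℂ) * Complex.I / (n : ℂ))

/-- The generator set `S_t = {1, …, 2t+1} \ {t}`. -/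
def St (t : ℕ) : Finset ℕ := (Finset.Icc 1 (2 * t + 1)).erase t

/-- The polynomial `Q_t(y) = y^{4t+3} − y^{3t+2} + y^{3t+1} − y^{2t+2} + y^{2t+1}
− y^{t+2} + y^{t+1} − 1` over `ℤ`. -/
noncomputable def Qt (t : ℕ) : Polynomial ℤ :=
  X ^ (4 * t + 3) - X ^ (3 * t + 2) + X ^ (3 * t + 1) - X ^ (2 * t + 2)
    + X ^ (2 * t + 1) - X ^ (t + 2) + X ^ (t + 1) - 1

/-!
The adjacency operator of `Circ(n, S)` acts on functions `ZMod n → ℂ` by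
`W ↦ (x ↦ ∑_{s ∈ S} (W (x + s) + W (x - s)))`, so the discrete Fourier transform diagonalises it,
with eigenvalue `∑_{s ∈ S} (μ^s + μ^(-s))` at the frequency `k`, where `μ = e^(2πik/n)`.
For `S = {1, 2, 4, 5, 6, 7}` this eigenvalue is `μ^(-7) (μ + 1)^2 R(μ)` with
`R = cofactor124567 ∈ ℤ[X]` of degree 12, and `R` vanishes at no root of unity: if `R(z) = 0`
for a primitive `d`-th root of unity `z`, then `R` also vanishes at the Galois conjugate `z^2`,
`-z^2 = z^(d/2 + 2)` or `-z = z^(d/2 + 1)` of `z` (according as `d` is odd, `2 mod 4` or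
`0 mod 4`), whereas `R(X)` is coprime to each of `R(X^2)`, `R(-X^2)` and `R(-X)`. So for even `n`
the only vanishing eigenvalue is the one at `μ = -1`, and the kernel is spanned by the
alternating vector `((-1)^i)_i`.
-/

open ZMod

section RootsOfUnity

variable {K : Type*} [CommRing K] [IsDomain K] {μ : K} {d : ℕ}

theorem IsPrimitiveRoot.pow_eq_neg_one_of_two_mul {k : ℕ} (hμ : IsPrimitiveRoot μ (2 * k))
    (hk : 0 < k) : μ ^ k = -1 := by
  have := hμ.pow_of_dvd hk.ne' (dvd_mul_left k 2)
  rw [Nat.mul_div_cancel _ hk] at this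
  exact this.eq_neg_one_of_two_right

variable [CharZero K]

theorem IsPrimitiveRoot.aeval_pow_eq_zero_of_coprime (hμ : IsPrimitiveRoot μ d) (hd : 0 < d)
    {f : ℤ[X]} (hf : aeval μ f = 0) {m : ℕ} (hm : m.Coprime d) : aeval (μ ^ m) f = 0 := by
  obtain ⟨g, rfl⟩ := minpoly.isIntegrallyClosed_dvd (hμ.isIntegral hd) hf
  rw [map_mul, hμ.minpoly_eq_pow_coprime hm, minpoly.aeval, zero_mul]

theorem IsPrimitiveRoot.aeval_sq_or_neg_sq_or_neg_eq_zero (hμ : IsPrimitiveRoot μ d)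
    (hd : 0 < d) {f : ℤ[X]} (hf : aeval μ f = 0) :
    aeval (μ ^ 2) f = 0 ∨ aeval (-μ ^ 2) f = 0 ∨ aeval (-μ) f = 0 := by
  obtain ⟨k, rfl | rfl⟩ := Nat.even_or_odd' d
  · have hk : μ ^ k = -1 := hμ.pow_eq_neg_one_of_two_mul (by omega)
    obtain ⟨j, rfl | rfl⟩ := Nat.even_or_odd' k
    · have hcop : (2 * j + 1).Coprime (2 * (2 * j)) := by
        rw [Nat.coprime_mul_iff_right]
        exact ⟨by simp, by simp⟩
      right; right
      simpa [pow_succ, hk] using hμ.aeval_pow_eq_zero_of_coprime hd hf hcop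
    · have hcop : (2 * j + 1 + 2).Coprime (2 * (2 * j + 1)) := by
        rw [Nat.coprime_mul_iff_right]
        refine ⟨by simp [Nat.coprime_comm, show 2 * j + 1 + 2 = 2 * (j + 1) + 1 by ring], ?_⟩
        rw [add_comm, Nat.coprime_add_self_left]
        simp
      right; left
      simpa [pow_add, hk] using hμ.aeval_pow_eq_zero_of_coprime hd hf hcop
  · left
    exact hμ.aeval_pow_eq_zero_of_coprime hd hf (by simp)

end RootsOfUnity

section Cofactor

/-- `(X + 1)^2 * cofactor124567 = X^7 * ∑_{s ∈ {1,2,4,5,6,7}} (X^s + X^(-s))`, so that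
`Qt 3 = (X - 1) * (X + 1)^2 * cofactor124567`. -/
noncomputable def cofactor124567 : ℤ[X] :=
  X ^ 12 - X ^ 11 + 2 * X ^ 10 - 2 * X ^ 9 + 2 * X ^ 8 - X ^ 7 + X ^ 6 - X ^ 5
    + 2 * X ^ 4 - 2 * X ^ 3 + 2 * X ^ 2 - X + 1

variable {A : Type*} [CommRing A]

lemma aeval_cofactor124567 (z : A) :
    aeval z cofactor124567 = z ^ 12 - z ^ 11 + 2 * z ^ 10 - 2 * z ^ 9 + 2 * z ^ 8 - z ^ 7
      + z ^ 6 - z ^ 5 + 2 * z ^ 4 - 2 * z ^ 3 + 2 * z ^ 2 - z + 1 := by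
  simp [cofactor124567, map_ofNat]

variable [CharZero A]

/- The three lemmas below are Bézout identities over `ℤ`: `R(X)` is coprime in `ℚ[X]` to `R(X^2)`,
`R(-X^2)` and `R(-X)` respectively. -/

lemma aeval_cofactor124567_sq_ne_zero {z : A} (hz : aeval z cofactor124567 = 0) :
    aeval (z ^ 2) cofactor124567 ≠ 0 := by
  intro hz2
  rw [aeval_cofactor124567] at hz hz2
  have : (18 : A) = 0 := by
    linear_combination (9 + 20 * z + 10 * z ^ 2 - 8 * z ^ 3 - 14 * z ^ 4 + 5 * z ^ 5 + 21 * z ^ 6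
      + 6 * z ^ 7 - 18 * z ^ 8 - 11 * z ^ 9 + 8 * z ^ 10 + 4 * z ^ 11 - 6 * z ^ 12 - 5 * z ^ 13
      - z ^ 14 + 7 * z ^ 15 + 9 * z ^ 16 + 6 * z ^ 17 + 3 * z ^ 18 + 5 * z ^ 19 + 4 * z ^ 20
      + z ^ 21 + z ^ 22 + 2 * z ^ 23) * hz
      + (9 - 11 * z + z ^ 2 - 15 * z ^ 3 - 9 * z ^ 4 - 7 * z ^ 5 - 6 * z ^ 6 - 7 * z ^ 7
      - 6 * z ^ 9 + z ^ 10 - 2 * z ^ 11) * hz2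
  exact absurd this (by norm_num)

lemma aeval_cofactor124567_neg_sq_ne_zero {z : A} (hz : aeval z cofactor124567 = 0) :
    aeval (-z ^ 2) cofactor124567 ≠ 0 := by
  intro hz2
  rw [aeval_cofactor124567] at hz hz2
  have : (38 : A) = 0 := by
    linear_combination (2 - 19 * z ^ 2 - 34 * z ^ 3 - 42 * z ^ 4 - 26 * z ^ 5 - 16 * z ^ 6
      - 29 * z ^ 7 - 17 * z ^ 8 - 5 * z ^ 9 + 10 * z ^ 10 - 11 * z ^ 11 - 24 * z ^ 12
      - 13 * z ^ 13 - 5 * z ^ 14 - 11 * z ^ 15 - 26 * z ^ 16 - 24 * z ^ 17 - 17 * z ^ 18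
      - 29 * z ^ 19 - 16 * z ^ 20 - 7 * z ^ 21 - 6 * z ^ 22 - 15 * z ^ 23) * hz
      + (36 + 2 * z - 21 * z ^ 2 + 17 * z ^ 3 - 9 * z ^ 4 - 5 * z ^ 5 + 21 * z ^ 6 - z ^ 7
      + 16 * z ^ 9 - 9 * z ^ 10 + 15 * z ^ 11) * hz2
  exact absurd this (by norm_num)

lemma aeval_cofactor124567_neg_ne_zero {z : A} (hz : aeval z cofactor124567 = 0) :
    aeval (-z) cofactor124567 ≠ 0 := by
  intro hz2
  rw [aeval_cofactor124567] at hz hz2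
  have : (2 : A) = 0 := by
    linear_combination (1 - 2 * z - 4 * z ^ 2 - 5 * z ^ 3 - 3 * z ^ 4 - z ^ 5 - 3 * z ^ 7
      - 4 * z ^ 8 - 4 * z ^ 9 - 3 * z ^ 10 - 3 * z ^ 11) * hz
      + (1 + 2 * z - 4 * z ^ 2 + 5 * z ^ 3 - 3 * z ^ 4 + z ^ 5 + 3 * z ^ 7 - 4 * z ^ 8
      + 4 * z ^ 9 - 3 * z ^ 10 + 3 * z ^ 11) * hz2
  exact absurd this two_ne_zero

theorem aeval_cofactor124567_ne_zero_of_pow_eq_one {K : Type*} [CommRing K] [IsDomain K]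
    [CharZero K] {z : K} {n : ℕ} (hn : 0 < n) (hz : z ^ n = 1) :
    aeval z cofactor124567 ≠ 0 := by
  intro h
  have hd : 0 < orderOf z := orderOf_pos_iff.2 (isOfFinOrder_iff_pow_eq_one.2 ⟨n, hn, hz⟩)
  rcases (IsPrimitiveRoot.orderOf z).aeval_sq_or_neg_sq_or_neg_eq_zero hd h with h' | h' | h'
  exacts [aeval_cofactor124567_sq_ne_zero h h', aeval_cofactor124567_neg_sq_ne_zero h h',
    aeval_cofactor124567_neg_ne_zero h h']

theorem sum_pow_add_inv_pow_124567_ne_zero {K : Type*} [Field K] [CharZero K] {μ : K} {n : ℕ}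
    (hn : 0 < n) (hμ : μ ^ n = 1) (hμ1 : μ ≠ -1) :
    ∑ s ∈ ({1, 2, 4, 5, 6, 7} : Finset ℕ), (μ ^ s + (μ ^ s)⁻¹) ≠ 0 := by
  have hμ0 : μ ≠ 0 := by rintro rfl; simp [zero_pow hn.ne'] at hμ
  have hfactor : μ ^ 7 * ∑ s ∈ ({1, 2, 4, 5, 6, 7} : Finset ℕ), (μ ^ s + (μ ^ s)⁻¹)
      = (μ + 1) ^ 2 * aeval μ cofactor124567 := by
    simp only [Finset.sum_insert, Finset.mem_insert, Finset.mem_singleton, Finset.sum_singleton,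
      Nat.reduceEqDiff, or_self, not_false_eq_true, aeval_cofactor124567]
    field_simp
    ring
  intro h
  rw [h, mul_zero, eq_comm, mul_eq_zero, pow_eq_zero_iff two_ne_zero,
    add_eq_zero_iff_eq_neg] at hfactor
  exact hfactor.elim hμ1 (aeval_cofactor124567_ne_zero_of_pow_eq_one hn hμ)

end Cofactor

namespace ZMod

lemma natCast_ne_zero_of_pos_of_lt {n a : ℕ} (h0 : 0 < a) (h : a < n) : (a : ZMod n) ≠ 0 := by
  rw [Ne, natCast_eq_zero_iff]
  exact fun hdvd ↦ (Nat.le_of_dvd h0 hdvd).not_gt h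

variable {N : ℕ} [NeZero N]

lemma finEquiv_apply (j : Fin N) : finEquiv N j = (j.val : ZMod N) := by
  obtain ⟨m, rfl⟩ := Nat.exists_eq_succ_of_ne_zero (NeZero.ne N)
  exact (Fin.cast_val_eq_self j).symm

lemma val_finEquiv (j : Fin N) : (finEquiv N j).val = j.val := by
  rw [finEquiv_apply, val_cast_of_lt j.isLt]

variable {E : Type*} [AddCommGroup E] [Module ℂ E]

lemma dft_comp_add_right (Φ : ZMod N → E) (a k : ZMod N) :
    𝓕 (fun j ↦ Φ (j + a)) k = stdAddChar (a * k) • 𝓕 Φ k := by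
  rw [dft_apply, dft_apply, smul_sum, ← (Equiv.subRight a).sum_comp]
  refine sum_congr rfl fun j _ ↦ ?_
  rw [Equiv.subRight_apply, sub_add_cancel, smul_smul, ← AddChar.map_add_eq_mul]
  ring_nf

lemma exists_eq_smul_stdAddChar_of_dft_eq_zero {Φ : ZMod N → E} {k₀ : ZMod N}
    (h : ∀ k ≠ k₀, 𝓕 Φ k = 0) : ∃ c : E, Φ = fun j ↦ stdAddChar (j * k₀) • c := by
  refine ⟨(N : ℂ)⁻¹ • 𝓕 Φ k₀, funext fun j ↦ ?_⟩
  calc Φ j = 𝓕⁻ (𝓕 Φ) j := by rw [LinearEquiv.symm_apply_apply]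
    _ = _ := by
      rw [invDFT_apply, sum_eq_single k₀ (fun k _ hk ↦ by rw [h k hk, smul_zero]) (by simp),
        smul_comm, mul_comm]

end ZMod

section Circulant

variable {n : ℕ} {S : Finset ℕ}

def circAdj {M : Type*} [AddCommMonoid M] (S : Finset ℕ) (W : ZMod n → M) (x : ZMod n) : M :=
  ∑ s ∈ S, (W (x + s) + W (x - s))

lemma circ_adj_iff_mem_biUnion (hS : ∀ s ∈ S, 0 < s ∧ 2 * s < n) (i j : Fin n) :
    (circ n S).Adj i j ↔
      (j.val : ZMod n) ∈ S.biUnion fun s ↦ {(i.val : ZMod n) + s, (i.val : ZMod n) - s} := by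
  simp only [circ, mem_biUnion, mem_insert, mem_singleton]
  constructor
  · rintro ⟨-, s, hs, h | h⟩
    · exact ⟨s, hs, Or.inr (by linear_combination -h)⟩
    · exact ⟨s, hs, Or.inl (by linear_combination h)⟩
  · rintro ⟨s, hs, h | h⟩
    all_goals
      have := hS s hs
      refine ⟨fun hij ↦ natCast_ne_zero_of_pos_of_lt (n := n) (a := s) (by omega) (by omega) ?_,
        s, hs, ?_⟩
      subst hij
    · linear_combination -h
    · right; linear_combination h
    · linear_combination h
    · left; linear_combination -h

lemma sum_biUnion_add_sub (hS : ∀ s ∈ S, 0 < s ∧ 2 * s < n) {M : Type*} [AddCommMonoid M]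
    (W : ZMod n → M) (x : ZMod n) :
    ∑ y ∈ S.biUnion (fun s ↦ {x + s, x - s}), W y = circAdj S W x := by
  have hadd : ∀ {a b : ℕ}, 0 < a + b → a + b < n → (a : ZMod n) + b ≠ 0 := fun h0 h ↦ by
    exact_mod_cast natCast_ne_zero_of_pos_of_lt h0 h
  have hinj : ∀ {a b : ℕ}, a < n → b < n → (a : ZMod n) = b → a = b := fun ha hb h ↦ by
    simpa [val_cast_of_lt ha, val_cast_of_lt hb] using congrArg ZMod.val h
  rw [sum_biUnion]
  · refine sum_congr rfl fun s hs ↦ sum_pair fun h ↦ ?_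
    have := hS s hs
    exact hadd (a := s) (b := s) (by omega) (by omega) (by linear_combination h)
  · intro s hs s' hs' hss'
    have := hS s hs; have := hS s' hs'
    simp only [Function.onFun, disjoint_insert_left, disjoint_insert_right, disjoint_singleton,
      mem_insert, mem_singleton, not_or]
    refine ⟨⟨fun h ↦ hss' (hinj (by omega) (by omega) (by linear_combination -h)),
      fun h ↦ hadd (a := s) (b := s') (by omega) (by omega) (by linear_combination h)⟩,
      fun h ↦ hadd (a := s) (b := s') (by omega) (by omega) (by linear_combination h),
      fun h ↦ hss' (hinj (by omega) (by omega) (by linear_combination -h))⟩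

variable [NeZero n]

lemma adjMat_circ_mulVec (hS : ∀ s ∈ S, 0 < s ∧ 2 * s < n) (w : Fin n → ℚ) (i : Fin n) :
    (adjMat (circ n S)).mulVec w i = circAdj S (w ∘ (finEquiv n).symm) (finEquiv n i) := by
  rw [finEquiv_apply, ← sum_biUnion_add_sub hS, ← sum_ite_mem_eq,
    ← (finEquiv n).toEquiv.sum_comp]
  simp only [RingEquiv.toEquiv_eq_coe, EquivLike.coe_coe, Function.comp_apply,
    RingEquiv.symm_apply_apply]
  simp only [Matrix.mulVec, dotProduct, adjMat, Matrix.of_apply, ite_mul, one_mul, zero_mul,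
    circ_adj_iff_mem_biUnion hS, finEquiv_apply]

lemma adjMat_circ_mulVec_eq_zero_iff (hS : ∀ s ∈ S, 0 < s ∧ 2 * s < n) (w : Fin n → ℚ) :
    (adjMat (circ n S)).mulVec w = 0 ↔ circAdj S (fun x ↦ (w ((finEquiv n).symm x) : ℂ)) = 0 := by
  have hcast : circAdj S (fun x ↦ (w ((finEquiv n).symm x) : ℂ)) =
      fun x ↦ ((circAdj S (w ∘ (finEquiv n).symm) x : ℚ) : ℂ) := by
    ext x; simp [circAdj]
  simp only [hcast, funext_iff, Pi.zero_apply, Rat.cast_eq_zero, adjMat_circ_mulVec hS]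
  exact ⟨fun h x ↦ by simpa using h ((finEquiv n).symm x), fun h i ↦ h _⟩

noncomputable def circEigenvalue (S : Finset ℕ) (k : ZMod n) : ℂ :=
  ∑ s ∈ S, (stdAddChar ((s : ZMod n) * k) + stdAddChar (-((s : ZMod n) * k)))

lemma circEigenvalue_eq_sum_pow (S : Finset ℕ) (k : ZMod n) :
    circEigenvalue S k = ∑ s ∈ S, (stdAddChar k ^ s + (stdAddChar k ^ s)⁻¹) := by
  simp only [circEigenvalue, ← nsmul_eq_mul, AddChar.map_neg_eq_inv, AddChar.map_nsmul_eq_pow]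

lemma dft_circAdj {E : Type*} [AddCommGroup E] [Module ℂ E] (W : ZMod n → E) (k : ZMod n) :
    𝓕 (circAdj S W) k = circEigenvalue S k • 𝓕 W k := by
  have : circAdj S W = ∑ s ∈ S, ((fun x ↦ W (x + s)) + fun x ↦ W (x + -s)) := by
    ext x; simp [circAdj, sub_eq_add_neg]
  simp only [this, map_sum, map_add, Finset.sum_apply, Pi.add_apply, dft_comp_add_right,
    circEigenvalue, sum_smul, add_smul, neg_mul]

lemma circAdj_stdAddChar (k : ZMod n) :
    circAdj S (fun j ↦ stdAddChar (j * k)) = fun j ↦ circEigenvalue S k * stdAddChar (j * k) := by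
  ext j
  simp only [circAdj, circEigenvalue, sum_mul, add_mul, ← AddChar.map_add_eq_mul]
  congr! 3 <;> ring

theorem exists_eq_smul_stdAddChar_of_circAdj_eq_zero {E : Type*} [AddCommGroup E] [Module ℂ E]
    {W : ZMod n → E} (hW : circAdj S W = 0) {k₀ : ZMod n}
    (hS : ∀ k ≠ k₀, circEigenvalue S k ≠ 0) : ∃ c : E, W = fun j ↦ stdAddChar (j * k₀) • c := by
  refine exists_eq_smul_stdAddChar_of_dft_eq_zero fun k hk ↦ ?_
  have := dft_circAdj (S := S) W k
  rw [hW, map_zero, Pi.zero_apply, eq_comm, smul_eq_zero] at this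
  exact this.resolve_left (hS k hk)

end Circulant

section HalfFrequency

variable {n : ℕ} [NeZero n]

lemma stdAddChar_pow_eq_one (k : ZMod n) : stdAddChar k ^ n = 1 := by
  rw [← AddChar.map_nsmul_eq_pow, nsmul_eq_mul, natCast_self, zero_mul, AddChar.map_zero_eq_one]

lemma stdAddChar_half (hn : Even n) : stdAddChar ((n / 2 : ℕ) : ZMod n) = -1 := by
  have hsq : stdAddChar ((n / 2 : ℕ) : ZMod n) * stdAddChar ((n / 2 : ℕ) : ZMod n) = 1 := by
    rw [← AddChar.map_add_eq_mul, ← Nat.cast_add, ← two_mul, Nat.two_mul_div_two_of_even hn,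
      natCast_self, AddChar.map_zero_eq_one]
  have hne : stdAddChar ((n / 2 : ℕ) : ZMod n) ≠ 1 := by
    have := NeZero.pos n
    rw [← AddChar.map_zero_eq_one (stdAddChar (N := n)), Ne, injective_stdAddChar.eq_iff]
    obtain ⟨m, rfl⟩ := hn
    exact natCast_ne_zero_of_pos_of_lt (by omega) (by omega)
  exact (mul_self_eq_one_iff.mp hsq).resolve_left hne

lemma stdAddChar_mul_half (hn : Even n) (x : ZMod n) :
    stdAddChar (x * ((n / 2 : ℕ) : ZMod n)) = (-1) ^ x.val := by
  conv_lhs => rw [← natCast_zmod_val x]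
  rw [← nsmul_eq_mul, AddChar.map_nsmul_eq_pow, stdAddChar_half hn]

lemma neg_one_pow_val_finEquiv_symm (hn : Even n) :
    (fun x ↦ (((-1 : ℚ) ^ ((finEquiv n).symm x).val : ℚ) : ℂ)) =
      fun x ↦ stdAddChar (x * ((n / 2 : ℕ) : ZMod n)) := by
  ext x
  rw [stdAddChar_mul_half hn, ← val_finEquiv, RingEquiv.apply_symm_apply]
  push_cast
  rfl

lemma circEigenvalue_124567_half (hn : Even n) :
    circEigenvalue ({1, 2, 4, 5, 6, 7} : Finset ℕ) ((n / 2 : ℕ) : ZMod n) = 0 := by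
  rw [circEigenvalue_eq_sum_pow, stdAddChar_half hn]
  norm_num

lemma circEigenvalue_124567_ne_zero (hn : Even n) {k : ZMod n} (hk : k ≠ (n / 2 : ℕ)) :
    circEigenvalue ({1, 2, 4, 5, 6, 7} : Finset ℕ) k ≠ 0 := by
  rw [circEigenvalue_eq_sum_pow]
  refine sum_pow_add_inv_pow_124567_ne_zero (NeZero.pos n) (stdAddChar_pow_eq_one k) ?_
  rw [← stdAddChar_half hn]
  exact fun h ↦ hk (injective_stdAddChar h)

end HalfFrequency

/-- For every even `n ≥ 16`, the circulant graph
`Circ(n, {1,2,4,5,6,7})` is a nut graph. -/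
theorem circulant_nut_124567
    (n : ℕ) (hn : 16 ≤ n) (hneven : Even n) :
    IsNutGraph (circ n ({1, 2, 4, 5, 6, 7} : Finset ℕ)) := by
  have : NeZero n := ⟨by omega⟩
  have hS : ∀ s ∈ ({1, 2, 4, 5, 6, 7} : Finset ℕ), 0 < s ∧ 2 * s < n := by
    intro s hs
    simp only [mem_insert, mem_singleton] at hs
    omega
  refine ⟨by omega, fun i ↦ (-1) ^ i.val, fun i ↦ by simp, ?_, fun w hw ↦ ?_⟩
  · rw [adjMat_circ_mulVec_eq_zero_iff hS, neg_one_pow_val_finEquiv_symm hneven,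
      circAdj_stdAddChar, circEigenvalue_124567_half hneven]
    simp only [zero_mul]
    rfl
  · obtain ⟨c, hc⟩ := exists_eq_smul_stdAddChar_of_circAdj_eq_zero
      ((adjMat_circ_mulVec_eq_zero_iff hS w).1 hw)
      fun k hk ↦ circEigenvalue_124567_ne_zero hneven hk
    have h0 := congrFun hc 0
    have hi := fun i ↦ congrFun hc (finEquiv n i)
    simp only [stdAddChar_mul_half hneven, val_finEquiv, RingEquiv.symm_apply_apply, val_zero,
      pow_zero, smul_eq_mul, one_mul] at h0 hi
    refine ⟨w ((finEquiv n).symm 0), funext fun i ↦ ?_⟩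
    rw [Pi.smul_apply, smul_eq_mul, ← Rat.cast_inj (α := ℂ), hi i]
    push_cast
    rw [h0, mul_comm]
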